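/- arXiv:2411.11127 — 5 statements merged into one kernel-verified Lean document; each statement's English description precedes it below -/
import Mathlib

section
/- Let (M_n, d_n)_{n∈ℕ} and (N_n, ∂_n)_{n∈ℕ} be sequences of nonempty metric spaces of uniformly bounded diameter, let φ : ∏_n M_n/Fin → ∏_n N_n/Fin be a function, and let Φ : ∏_n M_n → ∏_n N_n be a lifting of φ. Then: (i) for every ε ≥ 0, the set 𝒥_prod^ε is an ideal on ℕ containing all finite sets (it contains every finite set, is closed under subsets, and is closed under finite unions); and (ii) 𝒥_prod = ⋂_{ε>0} 𝒥_prod^ε. -/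
open Filter Topology Set

section Defs

variable (M : ℕ → Type*) [∀ n, MetricSpace (M n)]

/-- The relation `a ∼_Fin b` of asymptotic equality: `lim_n d_n(a_n, b_n) = 0`. -/
def finRel (a b : ∀ n, M n) : Prop :=
  Tendsto (fun n => dist (a n) (b n)) atTop (nhds (0 : ℝ))

theorem finRel_refl (a : ∀ n, M n) : finRel M a a := by
  unfold finRel
  have h : (fun n => dist (a n) (a n)) = fun _ => (0 : ℝ) := by funext n; simp
  rw [h]
  exact tendsto_const_nhds

theorem finRel_symm {a b : ∀ n, M n} (h : finRel M a b) : finRel M b a := by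
  unfold finRel at h ⊢
  simpa [dist_comm] using h

theorem finRel_trans {a b c : ∀ n, M n} (hab : finRel M a b) (hbc : finRel M b c) :
    finRel M a c := by
  unfold finRel at hab hbc ⊢
  have h := hab.add hbc
  rw [add_zero] at h
  exact squeeze_zero (fun n => dist_nonneg) (fun n => dist_triangle _ _ _) h

/-- The setoid of asymptotic equality on `∀ n, M n`. -/
def finSetoid : Setoid (∀ n, M n) :=
  ⟨finRel M, ⟨finRel_refl M, finRel_symm M, finRel_trans M⟩⟩

/-- The reduced product `∏ₙ Mₙ / Fin`. -/
abbrev RedProd := Quotient (finSetoid M)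

variable {M}

/-- The class of `a` in the reduced product. -/
def mkRP (a : ∀ n, M n) : RedProd M := Quotient.mk (finSetoid M) a

open Classical in
/-- `limsup` of a real sequence along a subset `S ⊆ ℕ`; by convention it is `0`
if `S` is finite. -/
noncomputable def limsupOn (S : Set ℕ) (f : ℕ → ℝ) : ℝ :=
  if S.Finite then 0 else Filter.limsup f (Filter.atTop ⊓ Filter.principal S)

/-- The pseudometric `d^S` computed on representatives:
`d^S(a,b) = limsup_{n ∈ S} d_n(a_n, b_n)`. -/
noncomputable def dS (S : Set ℕ) (a b : ∀ n, M n) : ℝ :=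
  limsupOn S fun n => dist (a n) (b n)

/-- The pseudometric `d^S` on the reduced product. -/
noncomputable def dSq (S : Set ℕ) (x y : RedProd M) : ℝ :=
  dS S (Quotient.out x) (Quotient.out y)

/-- `x =_S y`, i.e. `d^S(x, y) = 0`. -/
def eqS (S : Set ℕ) (x y : RedProd M) : Prop := dSq S x y = 0

end Defs

/-- Two subsets of `ℕ` are equal modulo finite if their symmetric difference is finite. -/
def EqModFin (S T : Set ℕ) : Prop := (symmDiff S T).Finite

/-- `α : Set ℕ → Set ℕ` is a lift of an automorphism of the Boolean algebra `𝒫(ℕ)/Fin`: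
it respects equality mod finite, is injective and surjective mod finite, and preserves
unions and complements mod finite. -/
def IsFinAut (α : Set ℕ → Set ℕ) : Prop :=
  (∀ S T, EqModFin S T → EqModFin (α S) (α T)) ∧
  (∀ S T, EqModFin (α S) (α T) → EqModFin S T) ∧
  (∀ T, ∃ S, EqModFin (α S) T) ∧
  (∀ S T, EqModFin (α (S ∪ T)) (α S ∪ α T)) ∧
  (∀ S, EqModFin (α Sᶜ) (α S)ᶜ)

section Maps

variable {M N : ℕ → Type*} [∀ n, MetricSpace (M n)] [∀ n, MetricSpace (N n)]

/-- `φ` is coordinate respecting, as witnessed by the automorphism (lifted by) `α`. -/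
def CoordRespectingWith (φ : RedProd M → RedProd N) (α : Set ℕ → Set ℕ) : Prop :=
  IsFinAut α ∧ ∀ (S : Set ℕ) (x y : RedProd M), eqS S x y → eqS (α S) (φ x) (φ y)

/-- `φ` is coordinate respecting. -/
def CoordRespecting (φ : RedProd M → RedProd N) : Prop :=
  ∃ α : Set ℕ → Set ℕ, CoordRespectingWith φ α

/-- `φ` is trivial: there are an almost permutation `f` of `ℕ` (a bijection between the
cofinite sets `D` and `f '' D`) and maps `hₙ : M_{f(n)} → N_n` with
`φ([a]) = [(hₙ(a_{f(n)}))ₙ]` for all `a`. -/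
def TrivialMap (φ : RedProd M → RedProd N) : Prop :=
  ∃ (f : ℕ → ℕ) (D : Set ℕ) (h : ∀ n, M (f n) → N n),
    Dᶜ.Finite ∧ Set.InjOn f D ∧ (f '' D)ᶜ.Finite ∧
    ∀ a : ∀ n, M n, φ (mkRP a) = mkRP fun n => h n (a (f n))

/-- `Φ` is a lifting of `φ`: `φ([a]) = [Φ(a)]` for every `a`. -/
def IsLifting (φ : RedProd M → RedProd N) (Φ : (∀ n, M n) → ∀ n, N n) : Prop :=
  ∀ a : ∀ n, M n, φ (mkRP a) = mkRP (Φ a)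

/-- `(hₙ)` is an `ε`-lifting of product form on `A` (relative to `Φ`):
`limsup_{n ∈ A} ∂ₙ(Φ(a)ₙ, hₙ(aₙ)) ≤ ε` for every `a`. -/
def IsProdLift (Φ : (∀ n, M n) → ∀ n, N n) (ε : ℝ) (A : Set ℕ)
    (h : ∀ n, M n → N n) : Prop :=
  ∀ a : ∀ n, M n, limsupOn A (fun n => dist (Φ a n) (h n (a n))) ≤ ε

/-- `𝒥_prod^ε`: the sets `A ⊆ ℕ` admitting an `ε`-lifting of product form on `A`.
`𝒥_prod` is `Jprod Φ 0`. -/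
def Jprod (Φ : (∀ n, M n) → ∀ n, N n) (ε : ℝ) : Set (Set ℕ) :=
  {A | ∃ h : ∀ n, M n → N n, IsProdLift Φ ε A h}

end Maps

/-- The spaces `Mₙ` have uniformly bounded diameter. -/
def UnifBdd (M : ℕ → Type*) [∀ n, MetricSpace (M n)] : Prop :=
  ∃ K : ℝ, ∀ (n : ℕ) (x y : M n), dist x y ≤ K

/-- The canonical identification of `ℕ → Bool` (Cantor space) with `𝒫(ℕ)`. -/
def funToSet (x : ℕ → Bool) : Set ℕ := {n | x n = true}

/-- A family of subsets of `ℕ` is meager if the corresponding subset of the Cantor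
space `ℕ → Bool` is meager. -/
def MeagerInP (𝒜 : Set (Set ℕ)) : Prop := IsMeagre (funToSet ⁻¹' 𝒜)

/-- An almost disjoint family: infinite sets with pairwise finite intersections. -/
def IsADFamily (𝒜 : Set (Set ℕ)) : Prop :=
  (∀ A ∈ 𝒜, A.Infinite) ∧ ∀ A ∈ 𝒜, ∀ B ∈ 𝒜, A ≠ B → (A ∩ B).Finite

/-- The Open Colouring Axiom: for every separable metrizable `X` and every partition
`[X]² = K₀ ∪ K₁` with `K₀` open (coded by a symmetric open `K ⊆ X × X`), either there
is an uncountable `K₀`-homogeneous set, or `X` is a countable union of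
`K₁`-homogeneous sets. -/
def OCA : Prop :=
  ∀ (X : Type) [TopologicalSpace X] [TopologicalSpace.SeparableSpace X]
    [TopologicalSpace.MetrizableSpace X] (K : Set (X × X)),
    IsOpen K → (∀ x y : X, (x, y) ∈ K → (y, x) ∈ K) →
    (∃ Y : Set X, ¬Y.Countable ∧ ∀ x ∈ Y, ∀ y ∈ Y, x ≠ y → (x, y) ∈ K) ∨
    (∃ C : ℕ → Set X, (⋃ n, C n) = Set.univ ∧
      ∀ n, ∀ x ∈ C n, ∀ y ∈ C n, x ≠ y → (x, y) ∉ K)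

/-- Martin's Axiom for `σ`-linked partial orders: if `P` is a countable union of sets of
pairwise compatible elements, then for every family of at most `ℵ₁` dense subsets of `P`
there is a filter on `P` meeting every member of the family. -/
def MAsigmaLinked : Prop :=
  ∀ (P : Type) [PartialOrder P] (L : ℕ → Set P),
    (⋃ n, L n) = Set.univ →
    (∀ n, ∀ p ∈ L n, ∀ q ∈ L n, ∃ r : P, r ≤ p ∧ r ≤ q) →
    ∀ 𝒟 : Set (Set P),
      (∀ D ∈ 𝒟, ∀ p : P, ∃ q ∈ D, q ≤ p) →
      Cardinal.mk 𝒟 ≤ Cardinal.aleph 1 →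
      ∃ G : Set P, G.Nonempty ∧
        (∀ p ∈ G, ∀ q ∈ G, ∃ r ∈ G, r ≤ p ∧ r ≤ q) ∧
        (∀ p ∈ G, ∀ q : P, p ≤ q → q ∈ G) ∧
        ∀ D ∈ 𝒟, (G ∩ D).Nonempty

/-!
If `h` and `g` are `ε`- and `δ`-liftings of product form on `A`, then eventually on `A` they
are uniformly `(ε + δ)`-close: otherwise a test point `a` collecting the bad values on
infinitely many coordinates would put `Φ(a)ₙ` close to both `hₙ(aₙ)` and `gₙ(aₙ)`.
Hence `1/(k+1)`-liftings `hₖ` are eventually uniformly Cauchy, and taking at coordinate `n` the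
map `h_{q(n)}` for a slowly increasing `q(n) → ∞` yields a `0`-lifting.
-/

theorem limsupOn_le_iff {A : Set ℕ} {f : ℕ → ℝ} {c : ℝ} (hf0 : ∀ n, 0 ≤ f n)
    (hf : BddAbove (range f)) (hc : 0 ≤ c) :
    limsupOn A f ≤ c ↔ ∀ c' > c, ∀ᶠ n in atTop, n ∈ A → f n < c' := by
  unfold limsupOn
  split_ifs with hA
  · refine iff_of_true hc fun _ _ => ?_
    filter_upwards [Nat.cofinite_eq_atTop ▸ hA.eventually_cofinite_notMem] with n hn hnA
    exact absurd hnA hn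
  · have : (atTop ⊓ 𝓟 A).NeBot := frequently_iff_neBot.1 (Nat.frequently_atTop_iff_infinite.2 hA)
    rw [limsup_le_iff (isCoboundedUnder_le_of_le _ hf0) hf.isBoundedUnder_of_range]
    simp only [eventually_inf_principal]

theorem Nat.exists_tendsto_atTop_eventually_diag {P : ℕ → ℕ → Prop}
    (hP : ∀ k, ∀ᶠ n in atTop, P k n) :
    ∃ q : ℕ → ℕ, Tendsto q atTop atTop ∧ ∀ᶠ n in atTop, P (q n) n := by
  choose m hm using fun k => eventually_atTop.1 (hP k)
  refine ⟨fun n => Nat.findGreatest (fun k => ∀ i ≤ k, m i ≤ n) n, ?_, ?_⟩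
  · refine tendsto_atTop.2 fun j => ?_
    filter_upwards [eventually_ge_atTop j,
      (eventually_all_finite (finite_Iic j)).2 fun i _ => eventually_ge_atTop (m i)]
      with n hjn hmn
    exact Nat.le_findGreatest hjn hmn
  · filter_upwards [eventually_ge_atTop (m 0)] with n hn
    refine hm _ n (Nat.findGreatest_spec (P := fun k => ∀ i ≤ k, m i ≤ n) (m := 0)
      (Nat.zero_le n) ?_ _ le_rfl)
    intro i hi
    rwa [Nat.le_zero.1 hi]

section ProdLift

variable {M N : ℕ → Type*} [∀ n, MetricSpace (N n)]
  {Φ : (∀ n, M n) → ∀ n, N n} {A B : Set ℕ} {ε δ : ℝ} {h g : ∀ n, M n → N n}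

theorem isProdLift_iff (hN : UnifBdd N) (hε : 0 ≤ ε) :
    IsProdLift Φ ε A h ↔
      ∀ a, ∀ c > ε, ∀ᶠ n in atTop, n ∈ A → dist (Φ a n) (h n (a n)) < c := by
  obtain ⟨K, hK⟩ := hN
  exact forall_congr' fun a =>
    limsupOn_le_iff (fun _ => dist_nonneg) ⟨K, forall_mem_range.2 fun n => hK n _ _⟩ hε

theorem IsProdLift.of_finite (hA : A.Finite) (hε : 0 ≤ ε) : IsProdLift Φ ε A h := fun _ => by
  rwa [limsupOn, if_pos hA]

theorem IsProdLift.mono_eps (hεδ : ε ≤ δ) (hh : IsProdLift Φ ε A h) : IsProdLift Φ δ A h :=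
  fun a => (hh a).trans hεδ

theorem IsProdLift.mono_set (hN : UnifBdd N) (hε : 0 ≤ ε) (hAB : A ⊆ B)
    (hh : IsProdLift Φ ε B h) : IsProdLift Φ ε A h := by
  refine (isProdLift_iff hN hε).2 fun a c hc => ?_
  filter_upwards [(isProdLift_iff hN hε).1 hh a c hc] with n hn hnA using hn (hAB hnA)

theorem IsProdLift.piecewise [DecidablePred (· ∈ A)] (hN : UnifBdd N) (hε : 0 ≤ ε)
    (hh : IsProdLift Φ ε A h) (hg : IsProdLift Φ ε B g) :
    IsProdLift Φ ε (A ∪ B) (A.piecewise h g) := by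
  refine (isProdLift_iff hN hε).2 fun a c hc => ?_
  filter_upwards [(isProdLift_iff hN hε).1 hh a c hc, (isProdLift_iff hN hε).1 hg a c hc]
    with n hnh hng hnAB
  by_cases hnA : n ∈ A
  · simpa only [Set.piecewise_eq_of_mem _ _ _ hnA] using hnh hnA
  · simpa only [Set.piecewise_eq_of_notMem _ _ _ hnA] using hng (hnAB.resolve_left hnA)

theorem IsProdLift.eventually_dist_le [∀ n, Nonempty (M n)] (hN : UnifBdd N) (hε : 0 ≤ ε)
    (hδ : 0 ≤ δ) (hh : IsProdLift Φ ε A h) (hg : IsProdLift Φ δ A g) {c : ℝ}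
    (hc : ε + δ < c) : ∀ᶠ n in atTop, n ∈ A → ∀ x, dist (h n x) (g n x) ≤ c := by
  classical
  by_contra hbad
  let a : ∀ n, M n := fun n =>
    if hx : ∃ x, c < dist (h n x) (g n x) then hx.choose else Classical.arbitrary _
  set η := (c - ε - δ) / 2 with hη
  have hah := (isProdLift_iff hN hε).1 hh a (ε + η) (by linarith)
  have hag := (isProdLift_iff hN hδ).1 hg a (δ + η) (by linarith)
  obtain ⟨n, hn, hnh, hng⟩ := ((not_eventually.1 hbad).and_eventually (hah.and hag)).exists
  push Not at hn
  obtain ⟨hnA, hx⟩ := hn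
  have hfar : c < dist (h n (a n)) (g n (a n)) := by
    simp only [a, dif_pos hx]
    exact hx.choose_spec
  linarith [dist_triangle_left (h n (a n)) (g n (a n)) (Φ a n), hnh hnA, hng hnA]

theorem exists_isProdLift_zero [∀ n, Nonempty (M n)] (hN : UnifBdd N)
    (h : ℕ → ∀ n, M n → N n) (hh : ∀ k : ℕ, IsProdLift Φ (1 / (k + 1)) A (h k)) :
    ∃ g, IsProdLift Φ 0 A g := by
  have hpos (k : ℕ) : (0 : ℝ) < 1 / (k + 1) := Nat.one_div_pos_of_nat
  have hcauchy (k : ℕ) : ∀ᶠ n in atTop, ∀ j ∈ Iic k,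
      n ∈ A → ∀ x, dist (h j n x) (h k n x) ≤ 3 * (1 / (j + 1)) := by
    refine (eventually_all_finite (finite_Iic k)).2 fun j hjk => ?_
    have : (1 : ℝ) / (k + 1) ≤ 1 / (j + 1) := Nat.one_div_le_one_div hjk
    exact (hh j).eventually_dist_le hN (hpos j).le (hpos k).le (hh k) (by linarith [hpos j])
  obtain ⟨q, hq, hqcauchy⟩ := Nat.exists_tendsto_atTop_eventually_diag hcauchy
  refine ⟨fun n => h (q n) n, (isProdLift_iff hN le_rfl).2 fun a c hc => ?_⟩
  obtain ⟨j, hj⟩ := exists_nat_one_div_lt (by linarith : (0 : ℝ) < c / 5)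
  filter_upwards [hq.eventually_ge_atTop j, hqcauchy,
    (isProdLift_iff hN (hpos j).le).1 (hh j) a (2 * (1 / (j + 1))) (by linarith [hpos j])]
    with n hjq hnq hnj hnA
  calc dist (Φ a n) (h (q n) n (a n))
      ≤ dist (Φ a n) (h j n (a n)) + dist (h j n (a n)) (h (q n) n (a n)) :=
        dist_triangle _ _ _
    _ < 2 * (1 / (j + 1)) + 3 * (1 / (j + 1)) :=
        add_lt_add_of_lt_of_le (hnj hnA) (hnq j hjq hnA _)
    _ < c := by linarith

theorem Jprod_zero_eq_iInter [∀ n, Nonempty (M n)] (hN : UnifBdd N) :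
    Jprod Φ 0 = ⋂ (ε : ℝ) (_ : 0 < ε), Jprod Φ ε := by
  refine Subset.antisymm (fun A ⟨h, hh⟩ => mem_iInter₂.2 fun ε hε => ⟨h, hh.mono_eps hε.le⟩)
    fun A hA => ?_
  choose h hh using fun k : ℕ => mem_iInter₂.1 hA (1 / (k + 1)) Nat.one_div_pos_of_nat
  exact exists_isProdLift_zero hN h hh

end ProdLift

theorem statement2_general
    (M N : ℕ → Type*) [∀ n, Nonempty (M n)]
    [∀ n, MetricSpace (N n)]
    (hN : UnifBdd N)
    (Φ : (∀ n, M n) → ∀ n, N n) :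
    (∀ ε : ℝ, 0 ≤ ε →
      (∀ A : Set ℕ, A.Finite → A ∈ Jprod Φ ε) ∧
      (∀ A B : Set ℕ, A ⊆ B → B ∈ Jprod Φ ε → A ∈ Jprod Φ ε) ∧
      (∀ A B : Set ℕ, A ∈ Jprod Φ ε → B ∈ Jprod Φ ε → A ∪ B ∈ Jprod Φ ε)) ∧
    Jprod Φ 0 = ⋂ (ε : ℝ) (_ : 0 < ε), Jprod Φ ε := by
  classical
  refine ⟨fun ε hε => ⟨fun A hA => ?_, ?_, ?_⟩, Jprod_zero_eq_iInter hN⟩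
  · exact ⟨fun n _ => Φ (fun m => Classical.arbitrary (M m)) n, .of_finite hA hε⟩
  · rintro A B hAB ⟨h, hh⟩
    exact ⟨h, hh.mono_set hN hε hAB⟩
  · rintro A B ⟨h, hh⟩ ⟨g, hg⟩
    exact ⟨A.piecewise h g, hh.piecewise hN hε hg⟩

/-- For every `ε ≥ 0`, `𝒥_prod^ε` is an ideal on `ℕ` containing all finite sets, and
`𝒥_prod = ⋂_{ε > 0} 𝒥_prod^ε`. -/
theorem statement2
    (M N : ℕ → Type*) [∀ n, MetricSpace (M n)] [∀ n, Nonempty (M n)]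
    [∀ n, MetricSpace (N n)] [∀ n, Nonempty (N n)]
    (hM : UnifBdd M) (hN : UnifBdd N)
    (φ : RedProd M → RedProd N) (Φ : (∀ n, M n) → ∀ n, N n)
    (hΦ : IsLifting φ Φ) :
    (∀ ε : ℝ, 0 ≤ ε →
      (∀ A : Set ℕ, A.Finite → A ∈ Jprod Φ ε) ∧
      (∀ A B : Set ℕ, A ⊆ B → B ∈ Jprod Φ ε → A ∈ Jprod Φ ε) ∧
      (∀ A B : Set ℕ, A ∈ Jprod Φ ε → B ∈ Jprod Φ ε → A ∪ B ∈ Jprod Φ ε)) ∧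
    Jprod Φ 0 = ⋂ (ε : ℝ) (_ : 0 < ε), Jprod Φ ε :=
  statement2_general M N hN Φ
end

section
/- Let (M_n, d_n)_{n∈ℕ} be a sequence of countable nonempty metric spaces of uniformly bounded diameter, (N_n, ∂_n)_{n∈ℕ} a sequence of nonempty separable metric spaces of uniformly bounded diameter, φ : ∏_n M_n/Fin → ∏_n N_n/Fin a function, and Φ a lifting of φ. Let ε > 0. Suppose 𝒜, ℬ ⊆ 𝒥_prod are nonmeager subsets of 𝒫(ℕ), and for each C ∈ 𝒜 ∪ ℬ fix a 0-lifting of product form (h_n^C)_{n∈ℕ} on C. Assume there is n₀ such that for all n ≥ n₀, all x ∈ M_n, and all y, z ∈ N_n with ∂_n(y,z) > ε, at least one of the sets {C ∈ 𝒜 : n ∈ C and ∂_n(h_n^C(x), y) ≤ ε/3} and {C ∈ ℬ : n ∈ C and ∂_n(h_n^C(x), z) ≤ ε/3} is meager. Then ℕ ∈ 𝒥_prod^{3ε}. -/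
/-!
For all large `n` the family `{C ∈ 𝒜 | n ∈ C}` is nonmeager: otherwise `𝒜` would be covered
by countably many meager families together with the meager family of sets almost disjoint
from an infinite set. Covering `N n` by countably many `ε/3`-balls then gives a point
`g n x` that is `ε/3`-close to `h C n x` for nonmeagerly many `C ∈ 𝒜`. If `g` were not a
`3ε`-lifting at `a`, then on an infinite set `D` the point `Φ a n` is `ε`-far from
`g n (a n)`, so only meagerly many `C ∈ ℬ` have `h C n (a n)` close to `Φ a n`. Yet every
`C ∈ ℬ` meeting `D` infinitely often has such an `n`, since `h C` is a `0`-lifting on `C`;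
hence `ℬ` would be meager.
-/

open Filter Topology Set

theorem isMeagre_setOf_finite_inter_true {E : Set ℕ} (hE : E.Infinite) :
    IsMeagre {x : ℕ → Bool | {n | n ∈ E ∧ x n = true}.Finite} := by
  set S : ℕ → Set (ℕ → Bool) := fun m => {x | ∀ n ∈ E, m ≤ n → x n = false}
  have hcover : {x : ℕ → Bool | {n | n ∈ E ∧ x n = true}.Finite} ⊆ ⋃ m, S m := by
    intro x hx
    obtain ⟨m, hm⟩ := hx.bddAbove
    refine mem_iUnion.2 ⟨m + 1, fun n hnE hmn => ?_⟩
    by_contra hn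
    have := hm (show n ∈ {n | n ∈ E ∧ x n = true} from ⟨hnE, by simpa using hn⟩)
    omega
  refine (isMeagre_iUnion fun m => IsNowhereDense.isMeagre ?_).mono hcover
  have hclosed : IsClosed (S m) := by
    simp only [S, ofPred_forall]
    exact isClosed_iInter fun n => isClosed_iInter fun _ => isClosed_iInter fun _ =>
      isClosed_eq (continuous_apply n) continuous_const
  refine hclosed.isNowhereDense_iff.2 (eq_empty_iff_forall_notMem.2 fun x hx => ?_)
  obtain ⟨I, u, hu, hIu⟩ := isOpen_pi_iff.1 isOpen_interior x hx
  -- Setting a coordinate `n ∈ E` outside `I` and beyond `m` to `true` leaves `S m`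
  -- without leaving the basic neighbourhood `I.pi u`.
  obtain ⟨n, hnE, hn⟩ := hE.exists_gt (max (I.sup id) m)
  have hnI : n ∉ I := fun hnI => (Finset.le_sup (f := id) hnI).trans (le_max_left _ _)
    |>.not_gt hn
  have hy : Function.update x n true ∈ (I : Set ℕ).pi u := fun i hi => by
    rw [Function.update_of_ne (ne_of_mem_of_not_mem hi hnI)]
    exact (hu i hi).2
  simpa using interior_subset (hIu hy) n hnE ((le_max_right _ _).trans hn.le)

theorem meagerInP_setOf_finite_inter {E : Set ℕ} (hE : E.Infinite) :
    MeagerInP {C : Set ℕ | (C ∩ E).Finite} := by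
  refine (isMeagre_setOf_finite_inter_true hE).mono fun x hx => ?_
  have hset : {n | n ∈ E ∧ x n = true} = funToSet x ∩ E := by ext; simp [funToSet, and_comm]
  rwa [mem_ofPred_eq, hset]

theorem MeagerInP.mono {𝒜 ℬ : Set (Set ℕ)} (h : 𝒜 ⊆ ℬ) (hℬ : MeagerInP ℬ) : MeagerInP 𝒜 :=
  IsMeagre.mono (preimage_mono h) hℬ

theorem meagerInP_iUnion {ι : Type*} [Countable ι] {𝒜 : ι → Set (Set ℕ)}
    (h𝒜 : ∀ i, MeagerInP (𝒜 i)) : MeagerInP (⋃ i, 𝒜 i) := by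
  rw [MeagerInP, preimage_iUnion]
  exact isMeagre_iUnion h𝒜

theorem meagerInP_of_forall_mem_inter {𝒞 : Set (Set ℕ)} {D : Set ℕ} (hD : D.Infinite)
    (P : Set ℕ → ℕ → Prop) (hP : ∀ n ∈ D, MeagerInP {C ∈ 𝒞 | n ∈ C ∧ P C n})
    (hcover : ∀ C ∈ 𝒞, (C ∩ D).Infinite → ∃ n ∈ C ∩ D, P C n) : MeagerInP 𝒞 := by
  have hsub : 𝒞 ⊆ {C | (C ∩ D).Finite} ∪ ⋃ n ∈ D, {C ∈ 𝒞 | n ∈ C ∧ P C n} := by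
    intro C hC
    by_cases hCD : (C ∩ D).Finite
    · exact Or.inl hCD
    · obtain ⟨n, ⟨hnC, hnD⟩, hPn⟩ := hcover C hC hCD
      exact Or.inr (mem_biUnion hnD ⟨hC, hnC, hPn⟩)
  refine MeagerInP.mono hsub ?_
  rw [MeagerInP, preimage_union, preimage_iUnion₂]
  exact (meagerInP_setOf_finite_inter hD).union (isMeagre_biUnion D.to_countable hP)

theorem finite_setOf_meagerInP_mem {𝒜 : Set (Set ℕ)} (h𝒜 : ¬MeagerInP 𝒜) :
    {n | MeagerInP {C ∈ 𝒜 | n ∈ C}}.Finite := by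
  by_contra hE
  refine h𝒜 (meagerInP_of_forall_mem_inter hE (fun _ _ => True) (fun _ hn => by simpa using hn)
    fun C _ hCE => hCE.nonempty.imp fun n hn => ⟨hn, trivial⟩)

theorem exists_not_meagerInP_dist_le {Y : Type*} [PseudoMetricSpace Y]
    [TopologicalSpace.SeparableSpace Y] {𝒞 : Set (Set ℕ)} (h𝒞 : ¬MeagerInP 𝒞)
    (f : Set ℕ → Y) {r : ℝ} (hr : 0 < r) : ∃ y, ¬MeagerInP {C ∈ 𝒞 | dist (f C) y ≤ r} := by
  have : Nonempty Y := ⟨f ∅⟩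
  obtain ⟨u, hu⟩ := TopologicalSpace.exists_dense_seq Y
  by_contra! hall
  refine h𝒞 (MeagerInP.mono (fun C hC => ?_) (meagerInP_iUnion fun k => hall (u k)))
  obtain ⟨k, hk⟩ := hu.exists_dist_lt (f C) hr
  exact mem_iUnion.2 ⟨k, hC, hk.le⟩

theorem exists_mem_inter_lt_of_limsupOn_lt {C D : Set ℕ} {f : ℕ → ℝ} {r : ℝ}
    (hf : BddAbove (range f)) (hC : limsupOn C f < r) (hCD : (C ∩ D).Infinite) :
    ∃ n ∈ C ∩ D, f n < r := by
  have hCinf : C.Infinite := hCD.mono inter_subset_left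
  rw [limsupOn, if_neg hCinf] at hC
  have hev := eventually_lt_of_limsup_lt hC (isBoundedUnder_of (hf.imp fun _ hb n => hb ⟨n, rfl⟩))
  rw [eventually_inf_principal] at hev
  obtain ⟨n, hn, hfn⟩ := (Nat.frequently_atTop_iff_infinite.2 hCD |>.and_eventually hev).exists
  exact ⟨n, hn, hfn hn.1⟩

theorem limsupOn_univ_le {f : ℕ → ℝ} {c : ℝ} (hf : 0 ≤ f) (hc : {n | c < f n}.Finite) :
    limsupOn univ f ≤ c := by
  rw [limsupOn, if_neg infinite_univ, principal_univ, inf_top_eq]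
  refine limsup_le_of_le (isCoboundedUnder_le_of_le atTop hf) ?_
  simpa [← Nat.cofinite_eq_atTop] using hc.eventually_cofinite_notMem

theorem exists_eventually_not_meagerInP_dist_le {M N : ℕ → Type*} [∀ n, PseudoMetricSpace (N n)]
    [∀ n, TopologicalSpace.SeparableSpace (N n)] {𝒜 : Set (Set ℕ)} (h𝒜 : ¬MeagerInP 𝒜)
    (h : Set ℕ → ∀ n, M n → N n) {r : ℝ} (hr : 0 < r) :
    ∃ g : ∀ n, M n → N n, ∀ᶠ n in atTop, ∀ x,
      ¬MeagerInP {C ∈ 𝒜 | n ∈ C ∧ dist (h C n x) (g n x) ≤ r} := by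
  have hex : ∀ n x, ∃ y : N n, ¬MeagerInP {C ∈ 𝒜 | n ∈ C} →
      ¬MeagerInP {C ∈ 𝒜 | n ∈ C ∧ dist (h C n x) y ≤ r} := by
    intro n x
    by_cases hn : MeagerInP {C ∈ 𝒜 | n ∈ C}
    · exact ⟨h ∅ n x, absurd hn⟩
    · obtain ⟨y, hy⟩ := exists_not_meagerInP_dist_le hn (fun C => h C n x) hr
      refine ⟨y, fun _ hmeag => hy (hmeag.mono ?_)⟩
      exact fun C hC => ⟨hC.1.1, hC.1.2, hC.2⟩
  choose g hg using hex
  have hfin := (finite_setOf_meagerInP_mem h𝒜).eventually_cofinite_notMem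
  rw [Nat.cofinite_eq_atTop] at hfin
  exact ⟨g, hfin.mono fun n hn x => hg n x hn⟩

theorem meagerInP_of_isProdLift {M N : ℕ → Type*} [∀ n, MetricSpace (M n)]
    [∀ n, MetricSpace (N n)] (hN : UnifBdd N) {Φ : (∀ n, M n) → ∀ n, N n}
    {ℬ : Set (Set ℕ)} {h : Set ℕ → ∀ n, M n → N n} (hℬ : ∀ C ∈ ℬ, IsProdLift Φ 0 C (h C))
    (a : ∀ n, M n) {r : ℝ} (hr : 0 < r) {D : Set ℕ} (hD : D.Infinite)
    (hfar : ∀ n ∈ D, MeagerInP {C ∈ ℬ | n ∈ C ∧ dist (h C n (a n)) (Φ a n) ≤ r}) :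
    MeagerInP ℬ := by
  obtain ⟨K, hK⟩ := hN
  refine meagerInP_of_forall_mem_inter hD _ hfar fun C hC hCD => ?_
  obtain ⟨n, hn, hlt⟩ := exists_mem_inter_lt_of_limsupOn_lt
    ⟨K, forall_mem_range.2 fun n => hK n _ _⟩ ((hℬ C hC a).trans_lt hr) hCD
  exact ⟨n, hn, (dist_comm (Φ a n) _ ▸ hlt).le⟩

theorem statement4_general
    (M N : ℕ → Type*) [∀ n, MetricSpace (M n)] [∀ n, MetricSpace (N n)]
    [∀ n, TopologicalSpace.SeparableSpace (N n)] (hN : UnifBdd N)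
    (Φ : (∀ n, M n) → ∀ n, N n) (ε : ℝ) (hε : 0 < ε) (𝒜 ℬ : Set (Set ℕ))
    (h𝒜m : ¬MeagerInP 𝒜) (hℬm : ¬MeagerInP ℬ)
    (h : Set ℕ → ∀ n, M n → N n)
    (hlift : ∀ C ∈ 𝒜 ∪ ℬ, IsProdLift Φ 0 C (h C))
    (hmeag : ∃ n₀ : ℕ, ∀ n ≥ n₀, ∀ x : M n, ∀ y z : N n, ε < dist y z →
      MeagerInP {C ∈ 𝒜 | n ∈ C ∧ dist (h C n x) y ≤ ε / 3} ∨
      MeagerInP {C ∈ ℬ | n ∈ C ∧ dist (h C n x) z ≤ ε / 3}) :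
    Set.univ ∈ Jprod Φ (3 * ε) := by
  obtain ⟨n₀, hmeag⟩ := hmeag
  have hε3 : 0 < ε / 3 := by positivity
  obtain ⟨g, hg⟩ := exists_eventually_not_meagerInP_dist_le h𝒜m h hε3
  refine ⟨g, fun a => limsupOn_univ_le (fun n => dist_nonneg) (not_infinite.1 fun hinf => ?_)⟩
  -- Wherever `g` is `3ε`-far from `Φ a`, `hg` rules out the `𝒜`-side of `hmeag`.
  have hD := (Nat.frequently_atTop_iff_infinite.2 hinf).and_eventually
    (hg.and (eventually_ge_atTop n₀))
  refine hℬm (meagerInP_of_isProdLift hN (fun C hC => hlift C (Or.inr hC)) a hε3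
    (Nat.frequently_atTop_iff_infinite.1 hD) ?_)
  rintro n ⟨hfar, hg_n, hn₀⟩
  have hsep : ε < dist (g n (a n)) (Φ a n) := by
    rw [dist_comm]
    exact lt_trans (by linarith) hfar
  exact (hmeag n hn₀ (a n) _ _ hsep).resolve_left (hg_n (a n))

/-- **Uniformization lemma.** If `𝒜, ℬ ⊆ 𝒥_prod` are nonmeager and for all large `n`,
all `x ∈ Mₙ` and all `ε`-separated `y, z ∈ Nₙ` at least one of the corresponding
approximation sets is meager, then `ℕ ∈ 𝒥_prod^{3ε}`. -/
theorem statement4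
    (M N : ℕ → Type*) [∀ n, MetricSpace (M n)] [∀ n, Countable (M n)] [∀ n, Nonempty (M n)]
    [∀ n, MetricSpace (N n)] [∀ n, Nonempty (N n)]
    [∀ n, TopologicalSpace.SeparableSpace (N n)]
    (hM : UnifBdd M) (hN : UnifBdd N)
    (φ : RedProd M → RedProd N) (Φ : (∀ n, M n) → ∀ n, N n)
    (hΦ : IsLifting φ Φ) (ε : ℝ) (hε : 0 < ε)
    (𝒜 ℬ : Set (Set ℕ)) (h𝒜J : 𝒜 ⊆ Jprod Φ 0) (hℬJ : ℬ ⊆ Jprod Φ 0)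
    (h𝒜m : ¬MeagerInP 𝒜) (hℬm : ¬MeagerInP ℬ)
    (h : Set ℕ → ∀ n, M n → N n)
    (hlift : ∀ C ∈ 𝒜 ∪ ℬ, IsProdLift Φ 0 C (h C))
    (hmeag : ∃ n₀ : ℕ, ∀ n ≥ n₀, ∀ x : M n, ∀ y z : N n, ε < dist y z →
      MeagerInP {C ∈ 𝒜 | n ∈ C ∧ dist (h C n x) y ≤ ε / 3} ∨
      MeagerInP {C ∈ ℬ | n ∈ C ∧ dist (h C n x) z ≤ ε / 3}) :
    Set.univ ∈ Jprod Φ (3 * ε) :=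
  statement4_general M N hN Φ ε hε 𝒜 ℬ h𝒜m hℬm h hlift hmeag
end

section
/- Let (M_n, d_n)_{n∈ℕ} and (N_n, ∂_n)_{n∈ℕ} be sequences of nonempty metric spaces of uniformly bounded diameter and Φ : ∏_n M_n → ∏_n N_n any function. Let A, B ⊆ ℕ, and let (h_n^A)_{n∈ℕ} and (h_n^B)_{n∈ℕ} be 0-liftings of product form on A and on B respectively (relative to Φ). Then for every ε > 0 the set Diff_ε(h^A, h^B) = {n ∈ A ∩ B : ∃x ∈ M_n with ∂_n(h_n^A(x), h_n^B(x)) > ε} is finite. -/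
open Filter Topology Set

/-! Choose one point `a` of the product that witnesses a difference `> ε` at every `n` where
there is one. Since `hᴬ` and `hᴮ` both lift `Φ` at `a` up to `o(1)` along `A` and `B`, the triangle
inequality puts every such `n` outside a finite set into the finite set where one of them is
`ε/2`-far from `Φ(a)`. -/

-- `hf` matters: the real `limsup` of a sequence unbounded above is the junk value `0`.
theorem finite_setOf_mem_le_of_limsupOn_lt {S : Set ℕ} {f : ℕ → ℝ} {δ : ℝ}
    (hf : BddAbove (range f)) (h : limsupOn S f < δ) : {n | n ∈ S ∧ δ ≤ f n}.Finite := by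
  by_cases hS : S.Finite
  · exact hS.subset fun n hn => hn.1
  rw [limsupOn, if_neg hS] at h
  have hev : ∀ᶠ n in atTop, n ∈ S → f n < δ :=
    eventually_inf_principal.1 (eventually_lt_of_limsup_lt h hf.isBoundedUnder_of_range)
  obtain ⟨N, hN⟩ := eventually_atTop.1 hev
  exact (finite_lt_nat N).subset fun n ⟨hnS, hn⟩ =>
    not_le.1 fun hNn => (hN n hNn hnS).not_ge hn

theorem IsProdLift.finite_setOf_le_dist {M N : ℕ → Type*} [∀ n, MetricSpace (M n)]
    [∀ n, MetricSpace (N n)] {Φ : (∀ n, M n) → ∀ n, N n} {ε δ : ℝ} {A : Set ℕ}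
    {h : ∀ n, M n → N n} (hh : IsProdLift Φ ε A h) (hN : UnifBdd N) (hεδ : ε < δ)
    (a : ∀ n, M n) : {n | n ∈ A ∧ δ ≤ dist (Φ a n) (h n (a n))}.Finite := by
  obtain ⟨K, hK⟩ := hN
  exact finite_setOf_mem_le_of_limsupOn_lt ⟨K, forall_mem_range.2 fun n => hK n _ _⟩
    ((hh a).trans_lt hεδ)

theorem statement6_general
    (M N : ℕ → Type*) [∀ n, MetricSpace (M n)] [∀ n, Nonempty (M n)]
    [∀ n, MetricSpace (N n)]
    (hN : UnifBdd N)
    (Φ : (∀ n, M n) → ∀ n, N n) (A B : Set ℕ)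
    (hA : ∀ n, M n → N n) (hB : ∀ n, M n → N n)
    (hAl : IsProdLift Φ 0 A hA) (hBl : IsProdLift Φ 0 B hB)
    (ε : ℝ) (hε : 0 < ε) :
    {n | n ∈ A ∩ B ∧ ∃ x : M n, ε < dist (hA n x) (hB n x)}.Finite := by
  have hwitness : ∀ n, ∃ x : M n,
      (∃ y : M n, ε < dist (hA n y) (hB n y)) → ε < dist (hA n x) (hB n x) := fun n =>
    (em _).elim (fun ⟨y, hy⟩ => ⟨y, fun _ => hy⟩)
      fun hn => ⟨Classical.arbitrary _, fun hy => absurd hy hn⟩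
  choose a ha using hwitness
  refine ((hAl.finite_setOf_le_dist hN (half_pos hε) a).union
    (hBl.finite_setOf_le_dist hN (half_pos hε) a)).subset ?_
  rintro n ⟨⟨hnA, hnB⟩, hdiff⟩
  have hgap : ε < dist (Φ a n) (hA n (a n)) + dist (Φ a n) (hB n (a n)) :=
    (ha n hdiff).trans_le (dist_triangle_left _ _ _)
  rcases le_or_gt (ε / 2) (dist (Φ a n) (hA n (a n))) with hfar | hnear
  · exact Or.inl ⟨hnA, hfar⟩
  · exact Or.inr ⟨hnB, by linarith⟩

/-- **Coherence.** If `(hₙ^A)` and `(hₙ^B)` are 0-liftings of product form on `A` and `B`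
(relative to the same `Φ`), then for every `ε > 0` the set `Diff_ε(h^A, h^B)` is finite. -/
theorem statement6
    (M N : ℕ → Type*) [∀ n, MetricSpace (M n)] [∀ n, Nonempty (M n)]
    [∀ n, MetricSpace (N n)] [∀ n, Nonempty (N n)]
    (hM : UnifBdd M) (hN : UnifBdd N)
    (Φ : (∀ n, M n) → ∀ n, N n) (A B : Set ℕ)
    (hA : ∀ n, M n → N n) (hB : ∀ n, M n → N n)
    (hAl : IsProdLift Φ 0 A hA) (hBl : IsProdLift Φ 0 B hB)
    (ε : ℝ) (hε : 0 < ε) :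
    {n | n ∈ A ∩ B ∧ ∃ x : M n, ε < dist (hA n x) (hB n x)}.Finite :=
  statement6_general M N hN Φ A B hA hB hAl hBl ε hε
end

section
/- Let (M_n, d_n)_{n∈ℕ} and (N_n, ∂_n)_{n∈ℕ} be sequences of nonempty metric spaces of uniformly bounded diameter, and let φ : ∏_n M_n/Fin → ∏_n N_n/Fin be a function. For each n let P_n, Q_n ⊆ M_n be finite subsets with P_n ∩ Q_n ≠ ∅, and let h_n : P_n → N_n and h'_n : Q_n → N_n be maps such that φ([a]) = [(h_n(a_n))_n] for every a ∈ ∏_n P_n and φ([a]) = [(h'_n(a_n))_n] for every a ∈ ∏_n Q_n. Then for every ε > 0 there is n₀ such that for all n ≥ n₀ and all x ∈ P_n ∩ Q_n, ∂_n(h_n(x), h'_n(x)) < ε. -/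
open Filter Topology Set

/-- Apply `hp` to a section that picks a counterexample to `p i` wherever there is one. -/
theorem Filter.eventually_forall_of_forall_sections {ι : Type*} {S : ι → Type*}
    [∀ i, Nonempty (S i)] {l : Filter ι} {p : ∀ i, S i → Prop}
    (hp : ∀ a : ∀ i, S i, ∀ᶠ i in l, p i (a i)) : ∀ᶠ i in l, ∀ x, p i x := by
  have hwitness : ∀ i, ∃ y : S i, p i y → ∀ x, p i x := fun i => by
    by_cases hall : ∀ x, p i x
    · exact ⟨Classical.arbitrary _, fun _ => hall⟩
    · obtain ⟨y, hy⟩ := not_forall.mp hall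
      exact ⟨y, fun hpy => absurd hpy hy⟩
  choose a ha using hwitness
  exact (hp a).mono ha

theorem statement10_general
    (M N : ℕ → Type*) [∀ n, MetricSpace (M n)]
    [∀ n, MetricSpace (N n)]
    (φ : RedProd M → RedProd N)
    (P Q : ∀ n, Set (M n))
    (hPQ : ∀ n, (P n ∩ Q n).Nonempty)
    (h : ∀ n, P n → N n) (h' : ∀ n, Q n → N n)
    (hh : ∀ (a : ∀ n, M n) (ha : ∀ n, a n ∈ P n),
      φ (mkRP a) = mkRP fun n => h n ⟨a n, ha n⟩)
    (hh' : ∀ (a : ∀ n, M n) (ha : ∀ n, a n ∈ Q n),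
      φ (mkRP a) = mkRP fun n => h' n ⟨a n, ha n⟩) :
    ∀ ε : ℝ, 0 < ε → ∃ n₀ : ℕ, ∀ n ≥ n₀, ∀ x : M n,
      ∀ (hx : x ∈ P n) (hx' : x ∈ Q n),
        dist (h n ⟨x, hx⟩) (h' n ⟨x, hx'⟩) < ε := by
  intro ε hε
  have : ∀ n, Nonempty ↥(P n ∩ Q n) := fun n => (hPQ n).to_subtype
  have hcommon : ∀ᶠ n in atTop, ∀ x : ↥(P n ∩ Q n),
      dist (h n ⟨x, x.2.1⟩) (h' n ⟨x, x.2.2⟩) < ε := by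
    refine eventually_forall_of_forall_sections fun a => ?_
    have hclass :
        mkRP (fun n => h n ⟨a n, (a n).2.1⟩) = mkRP fun n => h' n ⟨a n, (a n).2.2⟩ :=
      (hh (fun n => a n) fun n => (a n).2.1).symm.trans (hh' _ fun n => (a n).2.2)
    exact (Quotient.exact hclass : finRel N _ _).eventually_lt_const hε
  obtain ⟨n₀, hn₀⟩ := eventually_atTop.mp hcommon
  exact ⟨n₀, fun n hn x hx hx' => hn₀ n hn ⟨x, hx, hx'⟩⟩

/-- **Coherence for partial finite liftings.** If `hₙ : Pₙ → Nₙ` and `h'ₙ : Qₙ → Nₙ` both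
lift `φ` on the respective subproducts of finite sets with `Pₙ ∩ Qₙ ≠ ∅`, then for every
`ε > 0` eventually `∂ₙ(hₙ(x), h'ₙ(x)) < ε` for all `x ∈ Pₙ ∩ Qₙ`. -/
theorem statement10
    (M N : ℕ → Type*) [∀ n, MetricSpace (M n)] [∀ n, Nonempty (M n)]
    [∀ n, MetricSpace (N n)] [∀ n, Nonempty (N n)]
    (hM : UnifBdd M) (hN : UnifBdd N)
    (φ : RedProd M → RedProd N)
    (P Q : ∀ n, Set (M n)) (hPfin : ∀ n, (P n).Finite) (hQfin : ∀ n, (Q n).Finite)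
    (hPQ : ∀ n, (P n ∩ Q n).Nonempty)
    (h : ∀ n, P n → N n) (h' : ∀ n, Q n → N n)
    (hh : ∀ (a : ∀ n, M n) (ha : ∀ n, a n ∈ P n),
      φ (mkRP a) = mkRP fun n => h n ⟨a n, ha n⟩)
    (hh' : ∀ (a : ∀ n, M n) (ha : ∀ n, a n ∈ Q n),
      φ (mkRP a) = mkRP fun n => h' n ⟨a n, ha n⟩) :
    ∀ ε : ℝ, 0 < ε → ∃ n₀ : ℕ, ∀ n ≥ n₀, ∀ x : M n,
      ∀ (hx : x ∈ P n) (hx' : x ∈ Q n),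
        dist (h n ⟨x, hx⟩) (h' n ⟨x, hx'⟩) < ε :=
  statement10_general M N φ P Q hPQ h h' hh hh'
end

section
/- Assume that every subset of ℕ^ℕ of cardinality ℵ₁ is bounded in the order of eventual domination ≤* (i.e., the bounding number 𝔟 is greater than ℵ₁). Let (M_n, d_n)_{n∈ℕ} be a sequence of countable nonempty metric spaces of uniformly bounded diameter with fixed enumerations M_n = {x_{n,k} : k ∈ ℕ}, and set M_{n,m} = {x_{n,i} : i ≤ m}. Let (N_n, ∂_n)_{n∈ℕ} be a sequence of nonempty separable metric spaces of uniformly bounded diameter, let φ : ∏_n M_n/Fin → ∏_n N_n/Fin be a function, and for each f ∈ ℕ^ℕ let (h_{n,f})_{n∈ℕ} be maps h_{n,f} : M_{n,f(n)} → N_n such that φ([a]) = [(h_{n,f}(a_n))_n] for every a ∈ ∏_n M_{n,f(n)}. Fix ε > 0. Then there is no uncountable set H ⊆ ℕ^ℕ such that for all distinct f, g ∈ H there exist n ∈ ℕ and x ∈ M_{n,f(n)} ∩ M_{n,g(n)} with ∂_n(h_{n,f}(x), h_{n,g}(x)) > ε. -/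
open Filter Topology Set

/-- The finite initial segments `M_{n,m} = {x_{n,i} : i ≤ m}` of enumerated countable
spaces. -/
def Mseg {M : ℕ → Type*} (x : ∀ n, ℕ → M n) (n m : ℕ) : Set (M n) :=
  {y | ∃ i ≤ m, x n i = y}

/-!
Since `𝔟 > ℵ₁`, some `g` eventually dominates `ℵ₁` many members `f` of `H`. For each of them
`h f` and `h g` are `ε/2`-close at common points from some `k` on: otherwise a sequence running
through the bad points lies in both segment products, and its two lifts would not be asymptotic.
Below `k`, `h f` is pinned down up to `ε/2` by countably much data (the values `f n` and points
of countable dense subsets of the `N n`), so two distinct such `f` share `k` and this data. Then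
`h f` and `h f'` are within `ε` of each other at every common point, against the choice of `H`.
-/

theorem Filter.eventually_forall_dist_lt_of_tendsto {ι : Type*} {l : Filter ι}
    {A X : ι → Type*} [∀ i, Nonempty (A i)] [∀ i, PseudoMetricSpace (X i)]
    (u v : ∀ i, A i → X i)
    (huv : ∀ a : ∀ i, A i, Tendsto (fun i => dist (u i (a i)) (v i (a i))) l (𝓝 0))
    {δ : ℝ} (hδ : 0 < δ) :
    ∀ᶠ i in l, ∀ y, dist (u i y) (v i y) < δ := by
  classical
  by_contra hbad
  simp only [not_eventually, not_forall, not_lt] at hbad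
  let a : ∀ i, A i := fun i =>
    if hi : ∃ y, δ ≤ dist (u i y) (v i y) then hi.choose else Classical.arbitrary _
  obtain ⟨i, hi, hclose⟩ :=
    (hbad.and_eventually ((huv a).eventually (gt_mem_nhds hδ))).exists
  have ha : a i = hi.choose := dif_pos hi
  exact hclose.not_ge (ha ▸ hi.choose_spec)

theorem Set.exists_ne_mem_of_not_countable_of_subset_iUnion {α ι : Type*} [Countable ι]
    {s : Set α} (hs : ¬s.Countable) {t : ι → Set α} (hst : s ⊆ ⋃ i, t i) :
    ∃ i, ∃ a ∈ s ∩ t i, ∃ b ∈ s ∩ t i, a ≠ b := by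
  by_contra! hsub
  refine hs (Set.Countable.mono ?_ (Set.countable_iUnion fun i =>
    Set.Subsingleton.countable (s := s ∩ t i) fun a ha b hb => hsub i a ha b hb))
  intro a ha
  obtain ⟨i, hi⟩ := Set.mem_iUnion.mp (hst ha)
  exact Set.mem_iUnion.mpr ⟨i, ha, hi⟩

section Codes

variable {M N : ℕ → Type*} {x : ∀ n, ℕ → M n}

theorem mem_Mseg {n i m : ℕ} (hi : i ≤ m) : x n i ∈ Mseg x n m := ⟨i, hi, rfl⟩

theorem Mseg_mono {n m m' : ℕ} (hm : m ≤ m') : Mseg x n m ⊆ Mseg x n m' :=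
  fun _ ⟨i, hi, hy⟩ => ⟨i, hi.trans hm, hy⟩

variable [∀ n, PseudoMetricSpace (N n)] {h : ∀ (f : ℕ → ℕ) (n : ℕ), Mseg x n (f n) → N n}

/-- A threshold `k`, the values `f n` for `n < k`, and for each `n < k` and `i ≤ f n` a point of
`D n` approximating `h f n (x n i)`; countable when every `D n` is. -/
abbrev Code (D : ∀ n, Set (N n)) : Type _ :=
  Σ k : ℕ, Σ s : Fin k → ℕ, ∀ n : Fin k, Fin (s n + 1) → D n

variable (x h) in
def IsCode (g : ℕ → ℕ) {D : ∀ n, Set (N n)} (δ : ℝ) (c : Code D) (f : ℕ → ℕ) : Prop :=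
  (∀ n ≥ c.1, f n ≤ g n ∧ ∀ y (hf : y ∈ Mseg x n (f n)) (hg : y ∈ Mseg x n (g n)),
    dist (h f n ⟨y, hf⟩) (h g n ⟨y, hg⟩) < δ) ∧
  ∀ n : Fin c.1, f n = c.2.1 n ∧ ∀ (i : Fin (c.2.1 n + 1)) (hf : x n i ∈ Mseg x n (f n)),
    dist (h f n ⟨x n i, hf⟩) (c.2.2 n i) < δ

theorem exists_isCode {g f : ℕ → ℕ} {D : ∀ n, Set (N n)} (hD : ∀ n, Dense (D n)) {δ : ℝ}
    (hδ : 0 < δ)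
    (htail : ∀ᶠ n in atTop, f n ≤ g n ∧ ∀ y (hf : y ∈ Mseg x n (f n)) (hg : y ∈ Mseg x n (g n)),
      dist (h f n ⟨y, hf⟩) (h g n ⟨y, hg⟩) < δ) :
    ∃ c : Code D, IsCode x h g δ c f := by
  obtain ⟨k, hk⟩ := eventually_atTop.mp htail
  choose t ht using fun (n : Fin k) (i : Fin (f n + 1)) =>
    (hD n).exists_dist_lt (h f n ⟨x n i, mem_Mseg (Nat.lt_succ_iff.mp i.isLt)⟩) hδ
  exact ⟨⟨k, fun n => f n, fun n i => ⟨t n i, (ht n i).1⟩⟩, hk,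
    fun n => ⟨rfl, fun i _ => (ht n i).2⟩⟩

theorem dist_lt_of_isCode {g f f' : ℕ → ℕ} {D : ∀ n, Set (N n)} {δ : ℝ} {c : Code D}
    (hf : IsCode x h g δ c f) (hf' : IsCode x h g δ c f') {n : ℕ} {y : M n}
    (hy : y ∈ Mseg x n (f n)) (hy' : y ∈ Mseg x n (f' n)) :
    dist (h f n ⟨y, hy⟩) (h f' n ⟨y, hy'⟩) < 2 * δ := by
  rcases lt_or_ge n c.1 with hn | hn
  · obtain ⟨i, hi, rfl⟩ := hy
    obtain ⟨hfn, happrox⟩ := hf.2 ⟨n, hn⟩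
    obtain ⟨-, happrox'⟩ := hf'.2 ⟨n, hn⟩
    have hfn : f n = c.2.1 ⟨n, hn⟩ := hfn
    have hi' : i < c.2.1 ⟨n, hn⟩ + 1 := by omega
    calc _ ≤ _ := dist_triangle_right _ _ (c.2.2 ⟨n, hn⟩ ⟨i, hi'⟩ : N n)
      _ < δ + δ := add_lt_add (happrox ⟨i, hi'⟩ _) (happrox' ⟨i, hi'⟩ _)
      _ = 2 * δ := by ring
  · obtain ⟨hfg, hclose⟩ := hf.1 n hn
    obtain ⟨hf'g, hclose'⟩ := hf'.1 n hn
    have hyg : y ∈ Mseg x n (g n) := Mseg_mono hfg hy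
    calc _ ≤ _ := dist_triangle_right _ _ (h g n ⟨y, hyg⟩)
      _ < δ + δ := add_lt_add (hclose y hy hyg) (hclose' y hy' hyg)
      _ = 2 * δ := by ring

end Codes

theorem eventually_dist_lt_of_lift {M N : ℕ → Type*} [∀ n, MetricSpace (M n)]
    [∀ n, MetricSpace (N n)] {x : ∀ n, ℕ → M n} {h : ∀ (f : ℕ → ℕ) (n : ℕ), Mseg x n (f n) → N n}
    {φ : RedProd M → RedProd N}
    (hlift : ∀ (f : ℕ → ℕ) (a : ∀ n, M n) (ha : ∀ n, a n ∈ Mseg x n (f n)),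
      φ (mkRP a) = mkRP fun n => h f n ⟨a n, ha n⟩)
    (f g : ℕ → ℕ) {δ : ℝ} (hδ : 0 < δ) :
    ∀ᶠ n in atTop, ∀ y (hf : y ∈ Mseg x n (f n)) (hg : y ∈ Mseg x n (g n)),
      dist (h f n ⟨y, hf⟩) (h g n ⟨y, hg⟩) < δ := by
  have : ∀ n, Nonempty ↥(Mseg x n (f n) ∩ Mseg x n (g n)) :=
    fun n => ⟨⟨x n 0, mem_Mseg (Nat.zero_le _), mem_Mseg (Nat.zero_le _)⟩⟩
  refine (Filter.eventually_forall_dist_lt_of_tendsto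
    (A := fun n => ↥(Mseg x n (f n) ∩ Mseg x n (g n)))
    (fun n y => h f n ⟨y, y.2.1⟩) (fun n y => h g n ⟨y, y.2.2⟩) (fun a => ?_) hδ).mono
    fun n hn y hf hg => hn ⟨y, hf, hg⟩
  exact Quotient.exact <|
    (hlift f (fun n => a n) fun n => (a n).2.1).symm.trans (hlift g _ fun n => (a n).2.2)

theorem statement12_general
    (hb : ∀ F : Set (ℕ → ℕ), Cardinal.mk F = Cardinal.aleph 1 →
      ∃ g : ℕ → ℕ, ∀ f ∈ F, ∀ᶠ n in Filter.atTop, f n ≤ g n)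
    (M N : ℕ → Type*) [∀ n, MetricSpace (M n)]
    [∀ n, MetricSpace (N n)]
    [∀ n, TopologicalSpace.SeparableSpace (N n)]
    (x : ∀ n, ℕ → M n)
    (φ : RedProd M → RedProd N)
    (h : ∀ (f : ℕ → ℕ) (n : ℕ), Mseg x n (f n) → N n)
    (hlift : ∀ (f : ℕ → ℕ) (a : ∀ n, M n) (ha : ∀ n, a n ∈ Mseg x n (f n)),
      φ (mkRP a) = mkRP fun n => h f n ⟨a n, ha n⟩)
    (ε : ℝ) (hε : 0 < ε) :
    ¬∃ H : Set (ℕ → ℕ), ¬H.Countable ∧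
      ∀ f ∈ H, ∀ g ∈ H, f ≠ g →
        ∃ (n : ℕ) (y : M n) (hy : y ∈ Mseg x n (f n)) (hy' : y ∈ Mseg x n (g n)),
          ε < dist (h f n ⟨y, hy⟩) (h g n ⟨y, hy'⟩) := by
  rintro ⟨H, hH, hdisagree⟩
  obtain ⟨F, hFH, hF⟩ := Cardinal.le_mk_iff_exists_subset.mp <| Cardinal.aleph_one_le_iff.mpr <|
    not_le.mp (Cardinal.le_aleph0_iff_set_countable.not.mpr hH)
  have hFc : ¬F.Countable := by
    rw [← Cardinal.le_aleph0_iff_set_countable, hF]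
    exact Cardinal.aleph0_lt_aleph_one.not_ge
  obtain ⟨g, hg⟩ := hb F hF
  choose D hDc hD using fun n => TopologicalSpace.exists_countable_dense (N n)
  have := fun n => (hDc n).to_subtype
  have hcover : F ⊆ ⋃ c : Code D, {f | IsCode x h g (ε / 2) c f} := fun f hf =>
    Set.mem_iUnion.mpr <| exists_isCode hD (half_pos hε) <|
      (hg f hf).and (eventually_dist_lt_of_lift hlift f g (half_pos hε))
  obtain ⟨c, f, ⟨hfF, hf⟩, f', ⟨hf'F, hf'⟩, hne⟩ :=
    Set.exists_ne_mem_of_not_countable_of_subset_iUnion hFc hcover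
  obtain ⟨n, y, hy, hy', hfar⟩ := hdisagree f (hFH hfF) f' (hFH hf'F) hne
  have hnear := dist_lt_of_isCode hf hf' hy hy'
  linarith

/-- Assume `𝔟 > ℵ₁`. Given liftings `h_{n,f}` of `φ` on each `∏ₙ M_{n,f(n)}` and `ε > 0`,
there is no uncountable `H ⊆ ℕ^ℕ` any two distinct members of which `ε`-disagree at some
common point. -/
theorem statement12
    (hb : ∀ F : Set (ℕ → ℕ), Cardinal.mk F = Cardinal.aleph 1 →
      ∃ g : ℕ → ℕ, ∀ f ∈ F, ∀ᶠ n in Filter.atTop, f n ≤ g n)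
    (M N : ℕ → Type*) [∀ n, MetricSpace (M n)] [∀ n, Countable (M n)] [∀ n, Nonempty (M n)]
    [∀ n, MetricSpace (N n)] [∀ n, Nonempty (N n)]
    [∀ n, TopologicalSpace.SeparableSpace (N n)]
    (hM : UnifBdd M) (hN : UnifBdd N)
    (x : ∀ n, ℕ → M n) (hx : ∀ n, Function.Surjective (x n))
    (φ : RedProd M → RedProd N)
    (h : ∀ (f : ℕ → ℕ) (n : ℕ), Mseg x n (f n) → N n)
    (hlift : ∀ (f : ℕ → ℕ) (a : ∀ n, M n) (ha : ∀ n, a n ∈ Mseg x n (f n)),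
      φ (mkRP a) = mkRP fun n => h f n ⟨a n, ha n⟩)
    (ε : ℝ) (hε : 0 < ε) :
    ¬∃ H : Set (ℕ → ℕ), ¬H.Countable ∧
      ∀ f ∈ H, ∀ g ∈ H, f ≠ g →
        ∃ (n : ℕ) (y : M n) (hy : y ∈ Mseg x n (f n)) (hy' : y ∈ Mseg x n (g n)),
          ε < dist (h f n ⟨y, hy⟩) (h g n ⟨y, hy'⟩) :=
  statement12_general hb M N x φ h hlift ε hε
end
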